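/- arXiv:1605.00803 — 2 statements merged into one kernel-verified Lean document; each statement's English description precedes it below -/
import Mathlib

section
/- Let S = M(I, R, Λ; P) be a Rees matrix semiring whose additive idempotents form a subsemigroup of (S,+). Then the map φ(i,a,λ) = ((i, −p_{λ,i}, λ), p_{λ,i}+a) is a semiring isomorphism from S onto E⁺(S) × R, where E⁺(S) carries the induced semiring structure. -/
universe u

/-- A semiring in the sense of the paper: two semigroup operations with two-sided distributivity. -/
class PSemiring (S : Type u) extends Add S, Mul S where
  add_assoc : ∀ a b c : S, (a + b) + c = a + (b + c)
  mul_assoc : ∀ a b c : S, (a * b) * c = a * (b * c)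
  left_distrib : ∀ a b c : S, a * (b + c) = a * b + a * c
  right_distrib : ∀ a b c : S, (a + b) * c = a * c + b * c

section Defs

variable {S : Type u}

/-- `nmul n a` is the (n+1)-fold sum `a + a + ⋯ + a`; so positive multiples `na` (n ≥ 1)
are exactly the `nmul n a` for `n : ℕ`. -/
def nmul [Add S] : ℕ → S → S
  | 0, a => a
  | n+1, a => nmul n a + a

def AddIdem [Add S] (e : S) : Prop := e + e = e

def AddRegular [Add S] (a : S) : Prop := ∃ x, a = a + x + a

def AddCompletelyRegular [Add S] [Mul S] (a : S) : Prop :=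
  ∃ x, a = a + x + a ∧ a + x = x + a ∧ a * (a + x) = a + x

/-- Green's preorder `≤_L` on the additive reduct. -/
def addLeL [Add S] (a b : S) : Prop := a = b ∨ ∃ x, a = x + b

def addLeR [Add S] (a b : S) : Prop := a = b ∨ ∃ x, a = b + x

def addLeJ [Add S] (a b : S) : Prop :=
  a = b ∨ (∃ x, a = x + b) ∨ (∃ x, a = b + x) ∨ (∃ x y, a = x + b + y)

def addL [Add S] (a b : S) : Prop := addLeL a b ∧ addLeL b a
def addR [Add S] (a b : S) : Prop := addLeR a b ∧ addLeR b a
def addJ [Add S] (a b : S) : Prop := addLeJ a b ∧ addLeJ b a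
def addH [Add S] (a b : S) : Prop := addL a b ∧ addR a b

/-- `m` is the minimal index with `(m+1)a` additively regular. -/
def regIndex [Add S] (a : S) (m : ℕ) : Prop :=
  AddRegular (nmul m a) ∧ ∀ k < m, ¬ AddRegular (nmul k a)

def addLstar [Add S] (a b : S) : Prop :=
  ∃ m n, regIndex a m ∧ regIndex b n ∧ addL (nmul m a) (nmul n b)
def addRstar [Add S] (a b : S) : Prop :=
  ∃ m n, regIndex a m ∧ regIndex b n ∧ addR (nmul m a) (nmul n b)
def addJstar [Add S] (a b : S) : Prop :=
  ∃ m n, regIndex a m ∧ regIndex b n ∧ addJ (nmul m a) (nmul n b)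
def addHstar [Add S] (a b : S) : Prop := addLstar a b ∧ addRstar a b

/-- Closure of a subset under both operations. -/
def SubClosed [Add S] [Mul S] (K : Set S) : Prop :=
  ∀ a ∈ K, ∀ b ∈ K, a + b ∈ K ∧ a * b ∈ K

def addLeJIn [Add S] (K : Set S) (a b : S) : Prop :=
  a = b ∨ (∃ x ∈ K, a = x + b) ∨ (∃ x ∈ K, a = b + x) ∨ (∃ x ∈ K, ∃ y ∈ K, a = x + b + y)

def addJIn [Add S] (K : Set S) (a b : S) : Prop := addLeJIn K a b ∧ addLeJIn K b a

def AddCRIn [Add S] [Mul S] (K : Set S) (a : S) : Prop :=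
  ∃ x ∈ K, a = a + x + a ∧ a + x = x + a ∧ a * (a + x) = a + x

/-- The subset `K` is a completely simple semiring under the induced operations. -/
def CompletelySimpleOn [Add S] [Mul S] (K : Set S) : Prop :=
  SubClosed K ∧ (∀ a ∈ K, AddCRIn K a) ∧ ∀ a ∈ K, ∀ b ∈ K, addJIn K a b

/-- `K` is a rectangular skew-ring: completely simple with additive idempotents closed under `+`. -/
def RectSkewRingOn [Add S] [Mul S] (K : Set S) : Prop :=
  CompletelySimpleOn K ∧ ∀ e ∈ K, ∀ f ∈ K, AddIdem e → AddIdem f → AddIdem (e + f)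

/-- `K` is a left skew-ring: completely simple whose additive idempotents form a left zero band. -/
def LeftSkewRingOn [Add S] [Mul S] (K : Set S) : Prop :=
  CompletelySimpleOn K ∧ ∀ e ∈ K, ∀ f ∈ K, AddIdem e → AddIdem f → e + f = e

/-- `K` is a skew-ring: closed, and `(K,+)` is a group. -/
def SkewRingOn [Add S] [Mul S] (K : Set S) : Prop :=
  SubClosed K ∧ ∃ z ∈ K, (∀ a ∈ K, a + z = a ∧ z + a = a) ∧
    ∀ a ∈ K, ∃ b ∈ K, a + b = z ∧ b + a = z

def BiIdealIn [Add S] [Mul S] (C K : Set S) : Prop :=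
  K ⊆ C ∧ ∀ a ∈ K, ∀ x ∈ C, a + x ∈ K ∧ x + a ∈ K ∧ a * x ∈ K ∧ x * a ∈ K

/-- `C` is a nil-extension of its bi-ideal `K`. -/
def NilExtOn [Add S] [Mul S] (C K : Set S) : Prop :=
  BiIdealIn C K ∧ ∀ a ∈ C, ∃ n : ℕ, nmul n a ∈ K

/-- `ρ` is a b-lattice congruence on `S`. -/
def BLatticeCong [Add S] [Mul S] (ρ : S → S → Prop) : Prop :=
  Equivalence ρ ∧ (∀ a b c d, ρ a b → ρ c d → ρ (a + c) (b + d) ∧ ρ (a * c) (b * d)) ∧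
  (∀ a : S, ρ (a * a) a) ∧ (∀ a : S, ρ (a + a) a) ∧ (∀ a b : S, ρ (a + b) (b + a))

/-- `S` is a b-lattice of semirings each of whose classes satisfies `P`. -/
def BLatticeOf [Add S] [Mul S] (P : Set S → Prop) : Prop :=
  ∃ ρ : S → S → Prop, BLatticeCong ρ ∧ ∀ a : S, P {b | ρ a b}

/-- The subset `T` is a b-lattice of semirings satisfying `P` (classwise). -/
def BLatticeOfOn [Add S] [Mul S] (T : Set S) (P : Set S → Prop) : Prop :=
  ∃ ρ : S → S → Prop,
    (∀ a ∈ T, ρ a a) ∧ (∀ a b, ρ a b → a ∈ T ∧ b ∈ T) ∧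
    (∀ a b, ρ a b → ρ b a) ∧ (∀ a b c, ρ a b → ρ b c → ρ a c) ∧
    (∀ a b c d, ρ a b → ρ c d → ρ (a + c) (b + d) ∧ ρ (a * c) (b * d)) ∧
    (∀ a ∈ T, ρ (a * a) a) ∧ (∀ a ∈ T, ρ (a + a) a) ∧
    (∀ a ∈ T, ∀ b ∈ T, ρ (a + b) (b + a)) ∧
    ∀ a ∈ T, P {b | ρ a b}

end Defs

section Iso

/-- An isomorphism of paper semirings. -/
structure PIso (S : Type u) (T : Type u) [Add S] [Mul S] [Add T] [Mul T] extends S ≃ T where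
  map_add' : ∀ a b : S, toFun (a + b) = toFun a + toFun b
  map_mul' : ∀ a b : S, toFun (a * b) = toFun a * toFun b

variable (S : Type u) [PSemiring S]

def IsSkewRing : Prop :=
  ∃ z : S, (∀ a : S, a + z = a ∧ z + a = a) ∧ ∀ a : S, ∃ b : S, a + b = z ∧ b + a = z

def IsRectBandSemiring : Prop :=
  (∀ a : S, a + a = a) ∧ (∀ a : S, a * a = a) ∧ ∀ a x : S, a = a + x + a

def IsLeftZeroSemiring : Prop :=
  (∀ a : S, a * a = a) ∧ ∀ x a : S, x + a = x

/-- A rectangular skew-ring: a completely simple semiring whose additive reduct is orthodox. -/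
def IsRectSkewRing : Prop :=
  (∀ a : S, AddCompletelyRegular a) ∧ (∀ a b : S, addJ a b) ∧
    ∀ e f : S, AddIdem e → AddIdem f → AddIdem (e + f)

end Iso

section Rees

/-- The data of a Rees matrix semiring `M(I, R, Λ; P)`: a skew-ring `R`
(additive group with associative multiplication distributing over `+`),
bands `I` and `Λ` with distinguished elements `oI`, `oΛ` (playing the role of
the common element `o` of `I ∩ Λ`), and a sandwich matrix `p` satisfying the
conditions (1)–(6) of the paper. -/
structure ReesData (I Λ R : Type*) [Semigroup I] [Semigroup Λ] [AddGroup R] [Mul R] where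
  rmul_assoc : ∀ a b c : R, (a * b) * c = a * (b * c)
  rleft_distrib : ∀ a b c : R, a * (b + c) = a * b + a * c
  rright_distrib : ∀ a b c : R, (a + b) * c = a * c + b * c
  idemI : ∀ i : I, i * i = i
  idemΛ : ∀ l : Λ, l * l = l
  oI : I
  oΛ : Λ
  p : Λ → I → R
  p_right_o : ∀ l : Λ, p l oI = 0
  p_left_o : ∀ i : I, p oΛ i = 0
  cond2 : ∀ (i j k : I) (l m n : Λ),
    p (l * m) (k * j) = p (l * m) (i * j) - p (n * m) (i * j) + p (n * m) (k * j)
  cond3 : ∀ (i j k : I) (l m n : Λ),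
    p (m * l) (j * k) = p (m * l) (j * i) - p (m * n) (j * i) + p (m * n) (j * k)
  cond4 : ∀ (a : R) (l : Λ) (i : I), a * p l i = 0 ∧ p l i * a = 0
  cond5 : ∀ (a b : R) (i : I) (m : Λ),
    a * b + p (oΛ * m) (i * oI) = p (oΛ * m) (i * oI) + a * b
  cond6 : ∀ (a b : R) (j : I) (l : Λ),
    a * b + p (l * oΛ) (oI * j) = p (l * oΛ) (oI * j) + a * b

variable {I Λ R : Type*} [Semigroup I] [Semigroup Λ] [AddGroup R] [Mul R]

/-- Addition of the Rees matrix semiring on `I × R × Λ`: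
`(i,a,λ) + (j,b,μ) = (i, a + p λ j + b, μ)`. -/
def radd (D : ReesData I Λ R) (x y : I × R × Λ) : I × R × Λ :=
  (x.1, x.2.1 + D.p x.2.2 y.1 + y.2.1, y.2.2)

/-- Multiplication of the Rees matrix semiring on `I × R × Λ`:
`(i,a,λ) · (j,b,μ) = (ij, -p (λμ) (ij) + ab, λμ)`. -/
def rmul (D : ReesData I Λ R) (x y : I × R × Λ) : I × R × Λ :=
  (x.1 * y.1, -D.p (x.2.2 * y.2.2) (x.1 * y.1) + x.2.1 * y.2.1, x.2.2 * y.2.2)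

end Rees

section Aux
variable {I Λ R : Type*} [Semigroup I] [Semigroup Λ] [AddGroup R] [Mul R]

lemma rees_zero_mul (D : ReesData I Λ R) (x : R) : (0 : R) * x = 0 := by
  have h : (0 + 0 : R) * x = 0 * x + 0 * x := D.rright_distrib 0 0 x
  rw [add_zero] at h
  nth_rewrite 1 [← add_zero ((0:R) * x)] at h
  exact (add_left_cancel h).symm

lemma rees_neg_mul (D : ReesData I Λ R) (a x : R) : (-a) * x = -(a * x) := by
  have h : (a + -a) * x = a * x + (-a) * x := D.rright_distrib a (-a) x
  rw [add_neg_cancel, rees_zero_mul D] at h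
  exact (neg_eq_of_add_eq_zero_right h.symm).symm

lemma rees_eidem (D : ReesData I Λ R) (i : I) (l : Λ) :
    radd D (i, -D.p l i, l) (i, -D.p l i, l) = (i, -D.p l i, l) := by
  simp [radd]

lemma rees_p_const (D : ReesData I Λ R)
    (hadd : ∀ x y : I × R × Λ, radd D x x = x → radd D y y = y →
      radd D (radd D x y) (radd D x y) = radd D x y)
    (l m : Λ) (i : I) : D.p m i = D.p l i := by
  have h := hadd (i, -D.p l i, l) (D.oI, -D.p m D.oI, m)
    (rees_eidem D i l) (rees_eidem D D.oI m)
  simp only [radd, D.p_right_o, neg_zero, add_zero] at h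
  have h2 : -D.p l i + D.p m i + -D.p l i = -D.p l i := congrArg (fun z => z.2.1) h
  have h3 := congrArg (fun z => z + D.p l i) h2
  simp only [neg_add_cancel_right, neg_add_cancel] at h3
  exact (neg_add_eq_zero.mp h3).symm

end Aux

/-- if the additive idempotents of the Rees matrix semiring are closed
under both operations, then `φ (i,a,λ) = ((i, -p λ i, λ), p λ i + a)` is a semiring
isomorphism onto `E⁺(S) × R` (with componentwise induced operations). -/
theorem stmt6 {I Λ R : Type*} [Semigroup I] [Semigroup Λ] [AddGroup R] [Mul R]
    (D : ReesData I Λ R)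
    (hadd : ∀ x y : I × R × Λ, radd D x x = x → radd D y y = y →
      radd D (radd D x y) (radd D x y) = radd D x y)
    (hmul : ∀ x y : I × R × Λ, radd D x x = x → radd D y y = y →
      radd D (rmul D x y) (rmul D x y) = rmul D x y) :
    let φ : I × R × Λ → (I × R × Λ) × R :=
      fun x => ((x.1, -D.p x.2.2 x.1, x.2.2), D.p x.2.2 x.1 + x.2.1)
    (∀ x, radd D (φ x).1 (φ x).1 = (φ x).1) ∧
    Function.Injective φ ∧
    (∀ (e : I × R × Λ) (r : R), radd D e e = e → ∃ x, φ x = (e, r)) ∧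
    (∀ x y, φ (radd D x y) = (radd D (φ x).1 (φ y).1, (φ x).2 + (φ y).2)) ∧
    (∀ x y, φ (rmul D x y) = (rmul D (φ x).1 (φ y).1, (φ x).2 * (φ y).2)) := by
  intro φ
  have hz := rees_zero_mul D
  have pc := rees_p_const D hadd
  refine ⟨fun x => rees_eidem D x.1 x.2.2, ?_, ?_, ?_, ?_⟩
  · intro x y h
    obtain ⟨⟨h1, h2, h3⟩, h4⟩ :
        (x.1 = y.1 ∧ -D.p x.2.2 x.1 = -D.p y.2.2 y.1 ∧ x.2.2 = y.2.2) ∧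
          D.p x.2.2 x.1 + x.2.1 = D.p y.2.2 y.1 + y.2.1 := by
      simpa [φ, Prod.ext_iff] using h
    have h5 : x.2.1 = y.2.1 := by
      rw [h1, h3] at h4; exact add_left_cancel h4
    exact Prod.ext h1 (Prod.ext h5 h3)
  · rintro ⟨i, c, l⟩ r he
    have hc : c + D.p l i + c = c := congrArg (fun z => z.2.1) he
    have hc2 : c = -D.p l i := by
      have h0 : D.p l i + c = 0 := by
        have h := congrArg (fun z => -c + z) hc
        simp only [← add_assoc, neg_add_cancel, zero_add] at h
        exact h
      exact (neg_eq_of_add_eq_zero_right h0).symm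
    exact ⟨(i, -D.p l i + r, l), by simp [φ, hc2]⟩
  · intro x y
    have e1 : D.p y.2.2 x.1 = D.p x.2.2 x.1 := pc x.2.2 y.2.2 x.1
    have e2 : D.p x.2.2 y.1 = D.p y.2.2 y.1 := pc y.2.2 x.2.2 y.1
    simp [φ, radd, e1, e2, add_neg_cancel_right, add_assoc]
  · intro x y
    have c4 := D.cond4
    have hmm : (-D.p x.2.2 x.1) * (-D.p y.2.2 y.1) = 0 := by
      rw [rees_neg_mul D, (c4 _ _ _).2, neg_zero]
    have hsum : (D.p x.2.2 x.1 + x.2.1) * (D.p y.2.2 y.1 + y.2.1)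
        = x.2.1 * y.2.1 := by
      rw [D.rright_distrib, D.rleft_distrib, D.rleft_distrib,
        (c4 _ _ _).2, (c4 _ _ _).2, (c4 _ _ _).1]
      simp
    simp [φ, rmul, hmm, hsum, add_zero, neg_add_cancel_left]
end

section
/- Let S be a completely regular semiring which is a b-lattice of completely simple semirings R_α, and suppose all additive idempotents of S commute additively. Then each R_α contains exactly one additive idempotent; hence each (R_α,+) is a group and each R_α is a skew-ring. -/
universe u

section AuxProof

variable {S : Type u} [PSemiring S]

instance psAddSemigroup : AddSemigroup S := ⟨PSemiring.add_assoc⟩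

/-- If all elements are additively completely regular and all additive idempotents
commute, then `e ≤_J f` between idempotents gives `e + f = e`. -/
lemma key_le (hcr : ∀ a : S, AddCompletelyRegular a)
    (hcomm : ∀ e f : S, AddIdem e → AddIdem f → e + f = f + e)
    {e f : S} (he : AddIdem e) (hf : AddIdem f)
    (h : addLeJ e f) : e + f = e := by
  have hf' : f + f = f := hf
  rcases h with rfl | ⟨x, hx⟩ | ⟨x, hx⟩ | ⟨x, y, hx⟩
  · exact he
  · rw [hx, add_assoc, hf']
  · have h1 : f + e = e := by rw [hx, ← add_assoc, hf']
    rw [hcomm e f he hf]; exact h1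
  · obtain ⟨w, hw1, hw2, -⟩ := hcr (f + y)
    have hg : AddIdem (f + y + w) := by
      show f + y + w + (f + y + w) = f + y + w
      rw [← add_assoc, ← hw1]
    have hcg : f + (f + y + w) = f + y + w := by
      rw [← add_assoc, ← add_assoc, hf']
    have hgf : (f + y + w) + f = f + y + w := by
      rw [← hcomm f (f + y + w) hf hg]; exact hcg
    have hcc : (f + y) + (f + y + w) = f + y := by
      rw [hw2, ← add_assoc, ← hw1]
    have heg : e + (f + y + w) = e := by
      rw [hx, add_assoc x f y, add_assoc x (f + y) (f + y + w), hcc]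
    calc e + f = e + (f + y + w) + f := by rw [heg]
      _ = e + ((f + y + w) + f) := by rw [add_assoc]
      _ = e + (f + y + w) := by rw [hgf]
      _ = e := heg

lemma key_eq (hcr : ∀ a : S, AddCompletelyRegular a)
    (hcomm : ∀ e f : S, AddIdem e → AddIdem f → e + f = f + e)
    {e f : S} (he : AddIdem e) (hf : AddIdem f)
    (h1 : addLeJ e f) (h2 : addLeJ f e) : e = f := by
  have a1 := key_le hcr hcomm he hf h1
  have a2 := key_le hcr hcomm hf he h2
  calc e = e + f := a1.symm
    _ = f + e := hcomm e f he hf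
    _ = f := a2

lemma leJ_of_leJIn {K : Set S} {a b : S} (h : addLeJIn K a b) : addLeJ a b := by
  rcases h with h | ⟨x, -, h⟩ | ⟨x, -, h⟩ | ⟨x, -, y, -, h⟩
  · exact Or.inl h
  · exact Or.inr (Or.inl ⟨x, h⟩)
  · exact Or.inr (Or.inr (Or.inl ⟨x, h⟩))
  · exact Or.inr (Or.inr (Or.inr ⟨x, y, h⟩))

end AuxProof

/-- in a completely regular semiring which is a b-lattice of completely
simple semirings with commuting additive idempotents, each class contains exactly one
additive idempotent and is a skew-ring. -/
theorem stmt14 (S : Type u) [PSemiring S]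
    (hcr : ∀ a : S, AddCompletelyRegular a)
    (ρ : S → S → Prop) (hcong : BLatticeCong ρ)
    (hclass : ∀ a : S, CompletelySimpleOn {b | ρ a b})
    (hcomm : ∀ e f : S, AddIdem e → AddIdem f → e + f = f + e) :
    ∀ a : S, (∃! e : S, ρ a e ∧ AddIdem e) ∧ SkewRingOn {b | ρ a b} := by
  intro a
  obtain ⟨hsub, hcrK, hJK⟩ := hclass a
  have haK : ρ a a := hcong.1.refl a
  obtain ⟨x, hxK, h1, h2, -⟩ := hcrK a haK
  have heK : ρ a (a + x) := (hsub a haK x hxK).1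
  have he : AddIdem (a + x) := by
    show a + x + (a + x) = a + x
    rw [← add_assoc, ← h1]
  have uniq : ∀ f, ρ a f → AddIdem f → f = a + x := by
    intro f hfK hf
    obtain ⟨hle1, hle2⟩ := hJK f hfK (a + x) heK
    exact key_eq hcr hcomm hf he (leJ_of_leJIn hle1) (leJ_of_leJIn hle2)
  constructor
  · exact ⟨a + x, ⟨heK, he⟩, fun f hf => uniq f hf.1 hf.2⟩
  · refine ⟨hsub, a + x, heK, ?_, ?_⟩
    · intro b hbK
      obtain ⟨y, hyK, hb1, hb2, -⟩ := hcrK b hbK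
      have hby : AddIdem (b + y) := by
        show b + y + (b + y) = b + y
        rw [← add_assoc, ← hb1]
      have hbe : b + y = a + x := uniq _ ((hsub b hbK y hyK).1) hby
      constructor
      · rw [← hbe, hb2, ← add_assoc, ← hb1]
      · rw [← hbe]; exact hb1.symm
    · intro b hbK
      obtain ⟨y, hyK, hb1, hb2, -⟩ := hcrK b hbK
      have hby : AddIdem (b + y) := by
        show b + y + (b + y) = b + y
        rw [← add_assoc, ← hb1]
      have hbe : b + y = a + x := uniq _ ((hsub b hbK y hyK).1) hby
      have hybK : ρ a (y + b) := (hsub y hyK b hbK).1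
      have hcK : ρ a (y + b + y) := (hsub _ hybK y hyK).1
      refine ⟨y + b + y, hcK, ?_, ?_⟩
      · rw [← hbe, ← add_assoc, ← add_assoc, ← hb1]
      · rw [← hbe, add_assoc (y + b) y b, ← hb2]
        exact hby
end
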